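/- The function z ↦ Hω(z) = ∫ 1/(y-z) dω(y) is strictly increasing on each removed open middle-third interval G_j^k, tends to -∞ at the left endpoint and +∞ at the right endpoint, and hence has a unique zero z_j^k in G_j^k. -/

import Mathlib

/-!
On a gap `(a, b)` of the support of a finite measure `ω`, the function `z ↦ ∫ (y - z)⁻¹ dω(y)` is
continuous and strictly increasing, because every integrand `(y - z)⁻¹` with `y ∉ (a, b)` is.
Near `a` it is at most `ω(ℝ) (b - z)⁻¹ - ω[a - δ, a] / (z - a + δ)`, so it tends to `-∞` as soon
as `ω[a - δ, a] / δ` is unbounded in `δ`; symmetrically it tends to `+∞` at `b`. For the Cantor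
measure, self-similarity gives `ω(I_i^n) = 2⁻ⁿ`, and the endpoints of the gap `G_j^k` are endpoints
of Cantor intervals `I_i^n` of every later generation `n`, so these ratios include `(3/2)ⁿ`. The
zero is then given by the intermediate value theorem and is unique by monotonicity.
-/

open MeasureTheory Set Filter
open scoped ENNReal Topology

/-- Left endpoint of the `j`-th closed interval (0 ≤ j < 2^k) of generation `k`
in the middle-thirds Cantor construction on `[0,1]`. -/
noncomputable def cantorLeft : ℕ → ℕ → ℝ
  | 0, _ => 0
  | (k + 1), j => cantorLeft k (j / 2) + if j % 2 = 1 then 2 / 3 ^ (k + 1) else 0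

/-- The removed open middle third `G_j^k` of the generation-`k` Cantor interval `I_j^k`. -/
noncomputable def cantorGap (k j : ℕ) : Set ℝ :=
  Ioo (cantorLeft k j + (1 / 3) ^ (k + 1)) (cantorLeft k j + 2 * (1 / 3) ^ (k + 1))

theorem integral_lt_integral_of_ae_lt {α : Type*} [MeasurableSpace α] {μ : Measure α} [NeZero μ]
    {f g : α → ℝ} (hf : Integrable f μ) (hg : Integrable g μ) (hfg : ∀ᵐ x ∂μ, f x < g x) :
    ∫ x, f x ∂μ < ∫ x, g x ∂μ := by
  have hpos : ∀ᵐ x ∂μ, 0 < g x - f x := hfg.mono fun x hx => sub_pos.2 hx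
  rw [← sub_pos, ← integral_sub hg hf, integral_pos_iff_support_of_nonneg_ae
    (hpos.mono fun x hx => hx.le) (hg.sub hf), pos_iff_ne_zero]
  intro hnull
  obtain ⟨x, hx, hx'⟩ := ((measure_eq_zero_iff_ae_notMem.1 hnull).and hpos).exists
  exact hx hx'.ne'

theorem existsUnique_eq_of_strictMonoOn_Ioo {f : ℝ → ℝ} {a b : ℝ} (hab : a < b)
    (hmono : StrictMonoOn f (Ioo a b)) (hcont : ContinuousOn f (Ioo a b))
    (hbot : Tendsto f (𝓝[Ioo a b] a) atBot) (htop : Tendsto f (𝓝[Ioo a b] b) atTop) (c : ℝ) :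
    ∃! z, z ∈ Ioo a b ∧ f z = c := by
  rw [nhdsWithin_Ioo_eq_nhdsGT hab, ← tendsto_comp_coe_Ioo_atBot hab] at hbot
  rw [nhdsWithin_Ioo_eq_nhdsLT hab, ← tendsto_comp_coe_Ioo_atTop hab] at htop
  obtain ⟨z, hz, rfl⟩ := hcont.surjOn_of_tendsto (nonempty_Ioo.2 hab) hbot htop (mem_univ c)
  exact ⟨z, ⟨hz, rfl⟩, fun w ⟨hw, hwz⟩ => hmono.injOn hw hz hwz⟩

section GapIntegral

variable {ω : Measure ℝ} {a b y z : ℝ}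

lemma abs_inv_sub_le_of_notMem_Ioo (hy : y ∉ Ioo a b) (hz : z ∈ Ioo a b) :
    |(y - z)⁻¹| ≤ (min (z - a) (b - z))⁻¹ := by
  rw [abs_inv]
  refine inv_anti₀ (lt_min (sub_pos.2 hz.1) (sub_pos.2 hz.2)) ?_
  simp only [mem_Ioo, not_and_or, not_lt] at hy
  rcases hy with hy | hy
  · exact (min_le_left _ _).trans (by rw [abs_sub_comm]; exact (le_abs_self _).trans' (by linarith))
  · exact (min_le_right _ _).trans ((le_abs_self _).trans' (by linarith))

lemma inv_sub_lt_inv_sub_of_notMem_Ioo {z' : ℝ} (hy : y ∉ Ioo a b) (hz : a < z) (hzz' : z < z')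
    (hz' : z' < b) : (y - z)⁻¹ < (y - z')⁻¹ := by
  simp only [mem_Ioo, not_and_or, not_lt] at hy
  rcases hy with hy | hy
  · exact (inv_lt_inv_of_neg (by linarith) (by linarith)).2 (by linarith)
  · exact (inv_lt_inv₀ (by linarith) (by linarith)).2 (by linarith)

variable [IsFiniteMeasure ω]

lemma integrable_inv_sub_of_measure_Ioo (hgap : ω (Ioo a b) = 0) (hz : z ∈ Ioo a b) :
    Integrable (fun y => (y - z)⁻¹) ω :=
  (integrable_const _).mono' (by fun_prop) <| (measure_eq_zero_iff_ae_notMem.1 hgap).mono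
    fun _ hy => abs_inv_sub_le_of_notMem_Ioo hy hz

lemma strictMonoOn_integral_inv_sub [NeZero ω] (hgap : ω (Ioo a b) = 0) :
    StrictMonoOn (fun z => ∫ y, (y - z)⁻¹ ∂ω) (Ioo a b) := fun _ hz _ hz' hzz' =>
  integral_lt_integral_of_ae_lt (integrable_inv_sub_of_measure_Ioo hgap hz)
    (integrable_inv_sub_of_measure_Ioo hgap hz') <| (measure_eq_zero_iff_ae_notMem.1 hgap).mono
      fun _ hy => inv_sub_lt_inv_sub_of_notMem_Ioo hy hz.1 hzz' hz'.2

lemma continuousOn_integral_inv_sub (hgap : ω (Ioo a b) = 0) :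
    ContinuousOn (fun z => ∫ y, (y - z)⁻¹ ∂ω) (Ioo a b) := by
  intro z₀ hz₀
  obtain ⟨a', ha', ha'z₀⟩ := exists_between hz₀.1
  obtain ⟨b', hz₀b', hb'⟩ := exists_between hz₀.2
  refine (continuousAt_of_dominated (bound := fun _ => (min (a' - a) (b - b'))⁻¹)
    (Eventually.of_forall fun z => by fun_prop) ?_ (integrable_const _) ?_).continuousWithinAt
  · filter_upwards [Ioo_mem_nhds ha'z₀ hz₀b'] with z hz
    filter_upwards [measure_eq_zero_iff_ae_notMem.1 hgap] with y hy
    refine (abs_inv_sub_le_of_notMem_Ioo hy ⟨by linarith [hz.1], by linarith [hz.2]⟩).trans ?_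
    exact inv_anti₀ (lt_min (by linarith) (by linarith))
      (min_le_min (by linarith [hz.1]) (by linarith [hz.2]))
  · filter_upwards [measure_eq_zero_iff_ae_notMem.1 hgap] with y hy
    have hyz₀ : y ≠ z₀ := fun h => hy (h ▸ hz₀)
    exact (continuous_const.sub continuous_id).continuousAt.inv₀ (sub_ne_zero.2 hyz₀)

lemma integral_inv_sub_le (hgap : ω (Ioo a b) = 0) (hz : z ∈ Ioo a b) (δ : ℝ) :
    ∫ y, (y - z)⁻¹ ∂ω ≤ ω.real univ * (b - z)⁻¹ - ω.real (Icc (a - δ) a) / (z - a + δ) := by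
  have hbound : ∀ᵐ y ∂ω,
      (y - z)⁻¹ ≤ (b - z)⁻¹ - (Icc (a - δ) a).indicator (fun _ => (z - a + δ)⁻¹) y := by
    filter_upwards [measure_eq_zero_iff_ae_notMem.1 hgap] with y hy
    have hbz : 0 < (b - z)⁻¹ := inv_pos.2 (sub_pos.2 hz.2)
    simp only [mem_Ioo, not_and_or, not_lt] at hy
    rcases hy with hy | hy
    · by_cases hyδ : y ∈ Icc (a - δ) a
      · have hle : (y - z)⁻¹ ≤ -(z - a + δ)⁻¹ := by
          rw [← inv_neg, inv_le_inv_of_neg (by linarith [hz.1]) (by linarith [hz.1, hyδ.1])]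
          linarith [hyδ.1]
        rw [indicator_of_mem hyδ]
        linarith
      · rw [indicator_of_notMem hyδ, sub_zero]
        exact (inv_lt_zero.2 (by linarith [hz.1])).le.trans hbz.le
    · rw [indicator_of_notMem fun h => by linarith [h.2, hz.1, hz.2], sub_zero]
      exact inv_anti₀ (sub_pos.2 hz.2) (by linarith)
  have hind : Integrable ((Icc (a - δ) a).indicator fun _ => (z - a + δ)⁻¹) ω :=
    (integrable_const _).indicator measurableSet_Icc
  calc ∫ y, (y - z)⁻¹ ∂ω
      ≤ ∫ y, ((b - z)⁻¹ - (Icc (a - δ) a).indicator (fun _ => (z - a + δ)⁻¹) y) ∂ω :=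
        integral_mono_ae (integrable_inv_sub_of_measure_Ioo hgap hz)
          ((integrable_const _).sub hind) hbound
    _ = ω.real univ * (b - z)⁻¹ - ω.real (Icc (a - δ) a) / (z - a + δ) := by
        rw [integral_sub (integrable_const _) hind, integral_const,
          integral_indicator_const _ measurableSet_Icc]
        simp [div_eq_mul_inv]

lemma le_integral_inv_sub (hgap : ω (Ioo a b) = 0) (hz : z ∈ Ioo a b) (δ : ℝ) :
    ω.real (Icc b (b + δ)) / (b - z + δ) - ω.real univ * (z - a)⁻¹ ≤ ∫ y, (y - z)⁻¹ ∂ω := by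
  have hbound : ∀ᵐ y ∂ω,
      (Icc b (b + δ)).indicator (fun _ => (b - z + δ)⁻¹) y - (z - a)⁻¹ ≤ (y - z)⁻¹ := by
    filter_upwards [measure_eq_zero_iff_ae_notMem.1 hgap] with y hy
    have haz : 0 < (z - a)⁻¹ := inv_pos.2 (sub_pos.2 hz.1)
    simp only [mem_Ioo, not_and_or, not_lt] at hy
    rcases hy with hy | hy
    · rw [indicator_of_notMem fun h => by linarith [h.1, hz.1, hz.2], zero_sub, ← inv_neg]
      exact (inv_le_inv_of_neg (by linarith [hz.1]) (by linarith [hz.1])).2 (by linarith)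
    · by_cases hyδ : y ∈ Icc b (b + δ)
      · have hle : (b - z + δ)⁻¹ ≤ (y - z)⁻¹ :=
          inv_anti₀ (by linarith [hz.2]) (by linarith [hyδ.2])
        rw [indicator_of_mem hyδ]
        linarith
      · rw [indicator_of_notMem hyδ, zero_sub]
        exact (neg_neg_of_pos haz).le.trans (inv_pos.2 (by linarith [hz.2])).le
  have hind : Integrable ((Icc b (b + δ)).indicator fun _ => (b - z + δ)⁻¹) ω :=
    (integrable_const _).indicator measurableSet_Icc
  calc ω.real (Icc b (b + δ)) / (b - z + δ) - ω.real univ * (z - a)⁻¹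
      = ∫ y, ((Icc b (b + δ)).indicator (fun _ => (b - z + δ)⁻¹) y - (z - a)⁻¹) ∂ω := by
        rw [integral_sub hind (integrable_const _), integral_const,
          integral_indicator_const _ measurableSet_Icc]
        simp [div_eq_mul_inv]
    _ ≤ ∫ y, (y - z)⁻¹ ∂ω :=
        integral_mono_ae (hind.sub (integrable_const _))
          (integrable_inv_sub_of_measure_Ioo hgap hz) hbound

lemma tendsto_integral_inv_sub_atBot (hab : a < b) (hgap : ω (Ioo a b) = 0)
    (hmass : ∀ M, ∃ δ > 0, M ≤ ω.real (Icc (a - δ) a) / δ) :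
    Tendsto (fun z => ∫ y, (y - z)⁻¹ ∂ω) (𝓝[Ioo a b] a) atBot := by
  refine tendsto_atBot.2 fun M => ?_
  set C := ω.real univ * (2 / (b - a))
  obtain ⟨δ, hδ, hMδ⟩ := hmass (2 * (C - M))
  have hnear : a < min (a + δ) ((a + b) / 2) := lt_min (by linarith) (by linarith)
  filter_upwards [self_mem_nhdsWithin, nhdsWithin_le_nhds (Iio_mem_nhds hnear)] with z hz hzlt
  obtain ⟨hzδ, hzmid⟩ := lt_min_iff.1 (mem_Iio.1 hzlt)
  calc ∫ y, (y - z)⁻¹ ∂ω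
      ≤ ω.real univ * (b - z)⁻¹ - ω.real (Icc (a - δ) a) / (z - a + δ) :=
        integral_inv_sub_le hgap hz δ
    _ ≤ C - ω.real (Icc (a - δ) a) / (2 * δ) := by
        have hbz : (b - z)⁻¹ ≤ 2 / (b - a) := by
          rw [← inv_div]
          exact inv_anti₀ (by linarith) (by linarith)
        exact sub_le_sub (mul_le_mul_of_nonneg_left hbz measureReal_nonneg)
          (div_le_div_of_nonneg_left measureReal_nonneg (by linarith [hz.1]) (by linarith))
    _ ≤ M := by
        rw [mul_comm, ← div_div]
        linarith

lemma tendsto_integral_inv_sub_atTop (hab : a < b) (hgap : ω (Ioo a b) = 0)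
    (hmass : ∀ M, ∃ δ > 0, M ≤ ω.real (Icc b (b + δ)) / δ) :
    Tendsto (fun z => ∫ y, (y - z)⁻¹ ∂ω) (𝓝[Ioo a b] b) atTop := by
  refine tendsto_atTop.2 fun M => ?_
  set C := ω.real univ * (2 / (b - a))
  obtain ⟨δ, hδ, hMδ⟩ := hmass (2 * (M + C))
  have hnear : max (b - δ) ((a + b) / 2) < b := max_lt (by linarith) (by linarith)
  filter_upwards [self_mem_nhdsWithin, nhdsWithin_le_nhds (Ioi_mem_nhds hnear)] with z hz hzgt
  obtain ⟨hzδ, hzmid⟩ := max_lt_iff.1 (mem_Ioi.1 hzgt)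
  calc M
      ≤ ω.real (Icc b (b + δ)) / (2 * δ) - C := by
        rw [mul_comm, ← div_div]
        linarith
    _ ≤ ω.real (Icc b (b + δ)) / (b - z + δ) - ω.real univ * (z - a)⁻¹ := by
        have haz : (z - a)⁻¹ ≤ 2 / (b - a) := by
          rw [← inv_div]
          exact inv_anti₀ (by linarith) (by linarith)
        exact sub_le_sub
          (div_le_div_of_nonneg_left measureReal_nonneg (by linarith [hz.2]) (by linarith))
          (mul_le_mul_of_nonneg_left haz measureReal_nonneg)
    _ ≤ ∫ y, (y - z)⁻¹ ∂ω := le_integral_inv_sub hgap hz δ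

end GapIntegral

lemma cantorLeft_two_mul (k j : ℕ) : cantorLeft (k + 1) (2 * j) = cantorLeft k j := by
  simp [cantorLeft]

lemma cantorLeft_two_mul_add_one (k j : ℕ) :
    cantorLeft (k + 1) (2 * j + 1) = cantorLeft k j + 2 * (1 / 3) ^ (k + 1) := by
  simp [cantorLeft, Nat.mul_add_div, div_eq_mul_inv]

lemma cantorLeft_succ_of_lt {k j : ℕ} (hj : j < 2 ^ k) :
    cantorLeft (k + 1) j = cantorLeft k j / 3 := by
  induction k generalizing j with
  | zero =>
    obtain rfl : j = 0 := by omega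
    simp [cantorLeft]
  | succ k ih =>
    obtain ⟨i, rfl | rfl⟩ := Nat.even_or_odd' j
    · rw [cantorLeft_two_mul, cantorLeft_two_mul, ih (by omega)]
    · rw [cantorLeft_two_mul_add_one, cantorLeft_two_mul_add_one, ih (by omega)]
      ring

lemma cantorLeft_succ_two_pow_add {k j : ℕ} (hj : j < 2 ^ k) :
    cantorLeft (k + 1) (2 ^ k + j) = (cantorLeft k j + 2) / 3 := by
  induction k generalizing j with
  | zero =>
    obtain rfl : j = 0 := by omega
    norm_num [cantorLeft]
  | succ k ih =>
    obtain ⟨i, rfl | rfl⟩ := Nat.even_or_odd' j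
    · rw [pow_succ', ← mul_add, cantorLeft_two_mul, cantorLeft_two_mul, ih (by omega)]
    · rw [pow_succ', ← add_assoc, ← mul_add, cantorLeft_two_mul_add_one,
        cantorLeft_two_mul_add_one, ih (by omega)]
      ring

def cantorInterval (k j : ℕ) : Set ℝ := Icc (cantorLeft k j) (cantorLeft k j + (1 / 3) ^ k)

lemma cantorInterval_eq_union (k j : ℕ) : cantorInterval k j =
    cantorInterval (k + 1) (2 * j) ∪ cantorGap k j ∪ cantorInterval (k + 1) (2 * j + 1) := by
  have hlen : (1 / 3 : ℝ) ^ k = 3 * (1 / 3) ^ (k + 1) := by ring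
  have hlen_pos : (0 : ℝ) < (1 / 3) ^ (k + 1) := by positivity
  rw [cantorInterval, cantorInterval, cantorInterval, cantorGap, cantorLeft_two_mul,
    cantorLeft_two_mul_add_one, Icc_union_Ioo_eq_Ico (by linarith) (by linarith),
    Ico_union_Icc_eq_Icc (by linarith) (by linarith)]
  congr 1
  linarith

lemma cantorInterval_subset_Icc {k j : ℕ} (hj : j < 2 ^ k) : cantorInterval k j ⊆ Icc 0 1 := by
  induction k generalizing j with
  | zero =>
    obtain rfl : j = 0 := by omega
    simp [cantorInterval, cantorLeft]
  | succ k ih =>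
    refine Subset.trans ?_ (ih (j := j / 2) (by omega))
    rw [cantorInterval_eq_union k (j / 2)]
    obtain ⟨i, rfl | rfl⟩ := Nat.even_or_odd' j
    · rw [Nat.mul_div_cancel_left i two_pos]
      exact subset_union_left.trans subset_union_left
    · rw [Nat.mul_add_div two_pos, Nat.div_eq_of_lt one_lt_two, add_zero]
      exact subset_union_right

lemma measurableSet_cantorInterval (k j : ℕ) : MeasurableSet (cantorInterval k j) :=
  measurableSet_Icc

lemma cantorLeft_add_le_one {k j : ℕ} (hj : j < 2 ^ k) : cantorLeft k j + (1 / 3) ^ k ≤ 1 :=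
  (cantorInterval_subset_Icc hj (right_mem_Icc.2 (by simp))).2

lemma cantorLeft_nonneg {k j : ℕ} (hj : j < 2 ^ k) : 0 ≤ cantorLeft k j :=
  (cantorInterval_subset_Icc hj (left_mem_Icc.2 (by simp))).1

lemma preimage_div_three_cantorInterval {k j : ℕ} (hj : j < 2 ^ k) :
    (· / 3) ⁻¹' cantorInterval (k + 1) j = cantorInterval k j := by
  ext x
  simp only [cantorInterval, mem_preimage, mem_Icc, cantorLeft_succ_of_lt hj, pow_succ]
  constructor <;> rintro ⟨h₁, h₂⟩ <;> constructor <;> linarith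

lemma preimage_add_two_div_three_cantorInterval {k j : ℕ} (hj : j < 2 ^ k) :
    (fun x => (x + 2) / 3) ⁻¹' cantorInterval (k + 1) (2 ^ k + j) = cantorInterval k j := by
  ext x
  simp only [cantorInterval, mem_preimage, mem_Icc, cantorLeft_succ_two_pow_add hj, pow_succ]
  constructor <;> rintro ⟨h₁, h₂⟩ <;> constructor <;> linarith

lemma preimage_add_two_div_three_cantorInterval_subset {k j : ℕ} (hj : j < 2 ^ k) :
    (fun x => (x + 2) / 3) ⁻¹' cantorInterval (k + 1) j ⊆ (Icc 0 1)ᶜ := by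
  rintro x ⟨-, hx⟩ ⟨hx₀, -⟩
  rw [cantorLeft_succ_of_lt hj, pow_succ] at hx
  linarith [cantorLeft_add_le_one hj]

lemma preimage_div_three_cantorInterval_subset {k j : ℕ} (hj : j < 2 ^ k) :
    (· / 3) ⁻¹' cantorInterval (k + 1) (2 ^ k + j) ⊆ (Icc 0 1)ᶜ := by
  rintro x ⟨hx, -⟩ ⟨-, hx₁⟩
  rw [cantorLeft_succ_two_pow_add hj] at hx
  linarith [cantorLeft_nonneg hj]

lemma exists_cantorLeft_add_eq_gap_left {k j n : ℕ} (hj : j < 2 ^ k) (hn : k < n) :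
    ∃ i < 2 ^ n, cantorLeft n i + (1 / 3) ^ n = cantorLeft k j + (1 / 3) ^ (k + 1) := by
  induction n, hn using Nat.le_induction with
  | base => exact ⟨2 * j, by omega, by rw [cantorLeft_two_mul]⟩
  | succ n _ ih =>
    obtain ⟨i, hin, hi⟩ := ih
    refine ⟨2 * i + 1, by omega, ?_⟩
    rw [cantorLeft_two_mul_add_one, ← hi]
    ring

lemma exists_cantorLeft_eq_gap_right {k j n : ℕ} (hj : j < 2 ^ k) (hn : k < n) :
    ∃ i < 2 ^ n, cantorLeft n i = cantorLeft k j + 2 * (1 / 3) ^ (k + 1) := by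
  induction n, hn using Nat.le_induction with
  | base => exact ⟨2 * j + 1, by omega, cantorLeft_two_mul_add_one k j⟩
  | succ n _ ih =>
    obtain ⟨i, hin, hi⟩ := ih
    exact ⟨2 * i, by omega, by rw [cantorLeft_two_mul, hi]⟩

lemma exists_gt_le_half_pow_div_third_pow (k : ℕ) (M : ℝ) :
    ∃ n, k < n ∧ M ≤ (1 / 2) ^ n / (1 / 3) ^ n := by
  obtain ⟨n, hM, hk⟩ := (((tendsto_pow_atTop_atTop_of_one_lt (by norm_num : (1 : ℝ) < 3 / 2))
    |>.eventually_ge_atTop M).and (eventually_gt_atTop k)).exists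
  exact ⟨n, hk, by rw [← div_pow]; norm_num [hM]⟩

structure IsCantorMeasure (ω : Measure ℝ) : Prop where
  measure_compl_Icc : ω (Icc (0 : ℝ) 1)ᶜ = 0
  self_similar : ω = (1 / 2 : ℝ≥0∞) • ω.map (fun x => x / 3)
    + (1 / 2 : ℝ≥0∞) • ω.map (fun x => (x + 2) / 3)

namespace IsCantorMeasure

variable {ω : Measure ℝ}

lemma measure_eq (hω : IsCantorMeasure ω) {S : Set ℝ} (hS : MeasurableSet S) :
    ω S = 1 / 2 * ω ((· / 3) ⁻¹' S) + 1 / 2 * ω ((fun x => (x + 2) / 3) ⁻¹' S) := by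
  conv_lhs => rw [hω.self_similar]
  rw [Measure.add_apply, Measure.smul_apply, Measure.smul_apply,
    Measure.map_apply (by fun_prop) hS, Measure.map_apply (by fun_prop) hS]
  rfl

lemma measure_cantorInterval [IsProbabilityMeasure ω] (hω : IsCantorMeasure ω) {k j : ℕ}
    (hj : j < 2 ^ k) : ω (cantorInterval k j) = (1 / 2) ^ k := by
  induction k generalizing j with
  | zero =>
    obtain rfl : j = 0 := by omega
    simpa [cantorInterval, cantorLeft] using
      (prob_compl_eq_zero_iff measurableSet_Icc).1 hω.measure_compl_Icc
  | succ k ih =>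
    rw [hω.measure_eq (measurableSet_cantorInterval _ _)]
    rcases lt_or_ge j (2 ^ k) with hj' | hj'
    · rw [preimage_div_three_cantorInterval hj', ih hj',
        measure_mono_null (preimage_add_two_div_three_cantorInterval_subset hj')
          hω.measure_compl_Icc]
      ring
    · obtain ⟨i, rfl⟩ := Nat.exists_eq_add_of_le hj'
      have hi : i < 2 ^ k := by omega
      rw [preimage_add_two_div_three_cantorInterval hi, ih hi,
        measure_mono_null (preimage_div_three_cantorInterval_subset hi) hω.measure_compl_Icc]
      ring

lemma measureReal_cantorInterval [IsProbabilityMeasure ω] (hω : IsCantorMeasure ω) {k j : ℕ}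
    (hj : j < 2 ^ k) : ω.real (cantorInterval k j) = (1 / 2) ^ k := by
  simp [measureReal_def, hω.measure_cantorInterval hj, ENNReal.toReal_pow]

lemma measure_cantorGap [IsProbabilityMeasure ω] (hω : IsCantorMeasure ω) {k j : ℕ}
    (hj : j < 2 ^ k) : ω (cantorGap k j) = 0 := by
  have hlen_pos : (0 : ℝ) < (1 / 3) ^ (k + 1) := by positivity
  have hsplit := congrArg ω.real (cantorInterval_eq_union k j)
  rw [measureReal_union _ (measurableSet_cantorInterval _ _),
    measureReal_union (s₂ := cantorGap k j) _ measurableSet_Ioo, hω.measureReal_cantorInterval hj,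
    hω.measureReal_cantorInterval (by omega), hω.measureReal_cantorInterval (by omega)] at hsplit
  · rw [← measureReal_eq_zero_iff]
    linarith [pow_succ (1 / 2 : ℝ) k]
  all_goals
    simp only [Set.disjoint_left, cantorInterval, cantorGap, cantorLeft_two_mul,
      cantorLeft_two_mul_add_one, mem_union, mem_Icc, mem_Ioo]
    intro x hx hx'
  · linarith
  · rcases hx with hx | hx <;> linarith

lemma exists_le_measureReal_Icc_gap_left_div [IsProbabilityMeasure ω] (hω : IsCantorMeasure ω)
    {k j : ℕ} (hj : j < 2 ^ k) (M : ℝ) : ∃ δ > 0, M ≤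
      ω.real (Icc (cantorLeft k j + (1 / 3) ^ (k + 1) - δ)
        (cantorLeft k j + (1 / 3) ^ (k + 1))) / δ := by
  obtain ⟨n, hkn, hM⟩ := exists_gt_le_half_pow_div_third_pow k M
  obtain ⟨i, hin, hi⟩ := exists_cantorLeft_add_eq_gap_left hj hkn
  refine ⟨(1 / 3) ^ n, by positivity, ?_⟩
  rwa [← hi, add_sub_cancel_right, ← cantorInterval, hω.measureReal_cantorInterval hin]

lemma exists_le_measureReal_Icc_gap_right_div [IsProbabilityMeasure ω] (hω : IsCantorMeasure ω)
    {k j : ℕ} (hj : j < 2 ^ k) (M : ℝ) : ∃ δ > 0, M ≤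
      ω.real (Icc (cantorLeft k j + 2 * (1 / 3) ^ (k + 1))
        (cantorLeft k j + 2 * (1 / 3) ^ (k + 1) + δ)) / δ := by
  obtain ⟨n, hkn, hM⟩ := exists_gt_le_half_pow_div_third_pow k M
  obtain ⟨i, hin, hi⟩ := exists_cantorLeft_eq_gap_right hj hkn
  refine ⟨(1 / 3) ^ n, by positivity, ?_⟩
  rwa [← hi, ← cantorInterval, hω.measureReal_cantorInterval hin]

end IsCantorMeasure

/-- The function `z ↦ Hω(z) = ∫ (y - z)⁻¹ dω(y)` is strictly increasing
on each removed open middle third `G_j^k`, tends to `-∞` at the left endpoint and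
to `+∞` at the right endpoint (from within `G_j^k`), and hence has a unique zero
`z_j^k` in `G_j^k`.  Here `ω` is the middle-thirds Cantor measure, characterized as
the self-similar probability measure supported in `[0,1]`. -/
theorem stmt_3 (ω : Measure ℝ) [IsProbabilityMeasure ω]
    (hsupp : ω (Icc (0 : ℝ) 1)ᶜ = 0)
    (hself : ω = (1 / 2 : ℝ≥0∞) • ω.map (fun x => x / 3)
      + (1 / 2 : ℝ≥0∞) • ω.map (fun x => (x + 2) / 3))
    (H : ℝ → ℝ) (hH : ∀ z, H z = ∫ y, (y - z)⁻¹ ∂ω) :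
    ∀ k j : ℕ, j < 2 ^ k →
      StrictMonoOn H (cantorGap k j) ∧
      Tendsto H (𝓝[cantorGap k j] (cantorLeft k j + (1 / 3) ^ (k + 1))) atBot ∧
      Tendsto H (𝓝[cantorGap k j] (cantorLeft k j + 2 * (1 / 3) ^ (k + 1))) atTop ∧
      ∃! z : ℝ, z ∈ cantorGap k j ∧ H z = 0 := by
  have hω : IsCantorMeasure ω := ⟨hsupp, hself⟩
  obtain rfl : H = fun z => ∫ y, (y - z)⁻¹ ∂ω := funext hH
  intro k j hj
  have hab : cantorLeft k j + (1 / 3) ^ (k + 1) < cantorLeft k j + 2 * (1 / 3) ^ (k + 1) := by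
    have : (0 : ℝ) < (1 / 3) ^ (k + 1) := by positivity
    linarith
  have hgap := hω.measure_cantorGap hj
  have hmono := strictMonoOn_integral_inv_sub hgap
  have hbot := tendsto_integral_inv_sub_atBot hab hgap
    (hω.exists_le_measureReal_Icc_gap_left_div hj)
  have htop := tendsto_integral_inv_sub_atTop hab hgap
    (hω.exists_le_measureReal_Icc_gap_right_div hj)
  exact ⟨hmono, hbot, htop, existsUnique_eq_of_strictMonoOn_Ioo hab hmono
    (continuousOn_integral_inv_sub hgap) hbot htop 0⟩
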